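/- arXiv:2211.08580 — 6 statements merged into one kernel-verified Lean document; each statement's English description precedes it below -/
import Mathlib

section
/- Let Y be a standard Gaussian random variable on ℝ. For every real α ≥ 1 and every x > 0 satisfying x² ≥ 2(α − 1), one has E[|Y|^α · 1{|Y| ≥ x}] ≤ 4 x^{α−1} e^{−x²/2}. -/
/-!
Bound the standard Gaussian density by `exp (-y ^ 2 / 2)` and split this factor as
`exp (-y ^ 2 / 4) * exp (-y ^ 2 / 4)`. When `2 (α - 1) ≤ x ^ 2`, the function
`t ↦ t ^ (α - 1) * exp (-t ^ 2 / 4)` is largest at `t = x` on `[x, ∞)`, so on `{x ≤ |y|}` the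
integrand is at most `x ^ (α - 1) * exp (-x ^ 2 / 4) * |y| * exp (-y ^ 2 / 4)`, and the last
factor integrates over `{x ≤ |y|}` to exactly `4 * exp (-x ^ 2 / 4)`.
-/

open MeasureTheory ProbabilityTheory

open Real Set

lemma setIntegral_gaussianReal_eq_setIntegral_smul {E : Type*} [NormedAddCommGroup E]
    [NormedSpace ℝ E] {μ : ℝ} {v : NNReal} (hv : v ≠ 0) {s : Set ℝ} (hs : MeasurableSet s)
    (f : ℝ → E) :
    ∫ y in s, f y ∂gaussianReal μ v = ∫ y in s, gaussianPDFReal μ v y • f y := by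
  rw [← integral_indicator hs, integral_gaussianReal_eq_integral_smul hv,
    ← integral_indicator hs]
  congr 1 with y
  by_cases hy : y ∈ s <;> simp [hy]

lemma gaussianPDFReal_zero_one_le_exp (y : ℝ) : gaussianPDFReal 0 1 y ≤ exp (-y ^ 2 / 2) := by
  have h_sqrt : 1 ≤ √(2 * π) := one_le_sqrt.mpr (by linarith [pi_gt_three])
  simpa [gaussianPDFReal] using
    mul_le_of_le_one_left (exp_pos _).le (inv_le_one_of_one_le₀ h_sqrt)

lemma setIntegral_comp_abs_of_le_abs {f : ℝ → ℝ} {x : ℝ} (hx : 0 < x) :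
    ∫ y in {y | x ≤ |y|}, f |y| = 2 * ∫ y in Ioi x, f y := by
  have h_indicator : {y : ℝ | x ≤ |y|}.indicator (fun y => f |y|)
      = fun y => (Ici x).indicator f |y| := funext fun _ => indicator_comp_right _
  rw [← integral_indicator (measurableSet_le measurable_const measurable_abs), h_indicator,
    integral_comp_abs (f := (Ici x).indicator f), setIntegral_indicator measurableSet_Ici,
    inter_eq_right.mpr (Ici_subset_Ioi.mpr hx), integral_Ici_eq_integral_Ioi]

lemma integral_Ioi_mul_exp_neg_mul_sq {b : ℝ} (hb : 0 < b) (x : ℝ) :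
    ∫ y in Ioi x, y * exp (-b * y ^ 2) = exp (-b * x ^ 2) / (2 * b) := by
  have h_deriv (y : ℝ) :
      HasDerivAt (fun y => -exp (-b * y ^ 2) / (2 * b)) (y * exp (-b * y ^ 2)) y := by
    refine ((((hasDerivAt_pow 2 y).const_mul (-b)).exp.neg).div_const (2 * b)).congr_deriv ?_
    field_simp
    ring
  have h_lim : Filter.Tendsto (fun y => -exp (-b * y ^ 2) / (2 * b)) Filter.atTop
      (nhds (-0 / (2 * b))) :=
    (tendsto_exp_atBot.comp ((Filter.tendsto_pow_atTop two_ne_zero).const_mul_atTop_of_neg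
      (neg_neg_of_pos hb))).neg.div_const _
  rw [integral_Ioi_of_hasDerivAt_of_tendsto' (fun y _ => h_deriv y)
    (integrable_mul_exp_neg_mul_sq hb).integrableOn h_lim]
  ring

lemma rpow_mul_exp_neg_mul_sq_le {β b x t : ℝ} (hb : 0 ≤ b) (hx : 0 < x) (hxt : x ≤ t)
    (hβ : β ≤ 2 * b * x ^ 2) :
    t ^ β * exp (-b * t ^ 2) ≤ x ^ β * exp (-b * x ^ 2) := by
  have ht : 0 < t := hx.trans_le hxt
  rw [rpow_def_of_pos ht, rpow_def_of_pos hx, ← exp_add, ← exp_add, exp_le_exp]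
  have h_log_nonneg : 0 ≤ log t - log x := sub_nonneg.mpr (log_le_log hx hxt)
  have h_log_le : x * (log t - log x) ≤ t - x := by
    rw [← log_div ht.ne' hx.ne']
    calc x * log (t / x) ≤ x * (t / x - 1) := by
          gcongr
          exact log_le_sub_one_of_pos (by positivity)
      _ = t - x := by field_simp
  rw [← sub_nonpos]
  calc log t * β + -b * t ^ 2 - (log x * β + -b * x ^ 2)
      = β * (log t - log x) - b * (t ^ 2 - x ^ 2) := by ring
    _ ≤ 2 * b * x * (x * (log t - log x)) - b * (t ^ 2 - x ^ 2) := by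
        nlinarith [mul_le_mul_of_nonneg_right hβ h_log_nonneg]
    _ ≤ 2 * b * x * (t - x) - b * (t ^ 2 - x ^ 2) := by gcongr
    _ ≤ 0 := by nlinarith [mul_nonneg hb (sq_nonneg (t - x))]

lemma gaussianPDFReal_zero_one_mul_rpow_abs_le {α x y : ℝ} (hx : 0 < x) (hxy : x ≤ |y|)
    (hx2 : 2 * (α - 1) ≤ x ^ 2) :
    gaussianPDFReal 0 1 y * |y| ^ α
      ≤ x ^ (α - 1) * exp (-(1 / 4) * x ^ 2) * (|y| * exp (-(1 / 4) * |y| ^ 2)) := by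
  have hy : 0 < |y| := hx.trans_le hxy
  calc gaussianPDFReal 0 1 y * |y| ^ α ≤ exp (-|y| ^ 2 / 2) * |y| ^ α := by
        rw [sq_abs]
        gcongr
        exact gaussianPDFReal_zero_one_le_exp y
    _ = |y| ^ (α - 1) * exp (-(1 / 4) * |y| ^ 2) * (|y| * exp (-(1 / 4) * |y| ^ 2)) := by
        rw [rpow_sub_one hy.ne', mul_mul_mul_comm, div_mul_cancel₀ _ hy.ne', ← exp_add]
        ring_nf
    _ ≤ x ^ (α - 1) * exp (-(1 / 4) * x ^ 2) * (|y| * exp (-(1 / 4) * |y| ^ 2)) := by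
        gcongr ?_ * _
        exact rpow_mul_exp_neg_mul_sq_le (by norm_num) hx hxy (by linarith)

lemma integrable_abs_mul_exp_neg_mul_sq {b : ℝ} (hb : 0 < b) :
    Integrable fun y : ℝ => |y| * exp (-b * |y| ^ 2) :=
  (integrable_mul_exp_neg_mul_sq hb).norm.congr (ae_of_all _ fun y => by simp [sq_abs])

theorem gaussian_tail_moment_general (α x : ℝ) (hx : 0 < x)
    (hx2 : 2 * (α - 1) ≤ x ^ 2) :
    ∫ y in {y : ℝ | x ≤ |y|}, |y| ^ α ∂(gaussianReal 0 1)
      ≤ 4 * x ^ (α - 1) * Real.exp (-x ^ 2 / 2) := by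
  set C := x ^ (α - 1) * exp (-(1 / 4) * x ^ 2)
  have hS : MeasurableSet {y : ℝ | x ≤ |y|} := measurableSet_le measurable_const measurable_abs
  calc ∫ y in {y : ℝ | x ≤ |y|}, |y| ^ α ∂(gaussianReal 0 1)
      = ∫ y in {y : ℝ | x ≤ |y|}, gaussianPDFReal 0 1 y * |y| ^ α :=
        setIntegral_gaussianReal_eq_setIntegral_smul one_ne_zero hS _
    _ ≤ ∫ y in {y : ℝ | x ≤ |y|}, C * (|y| * exp (-(1 / 4) * |y| ^ 2)) := by
        refine integral_mono_of_nonneg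
          (ae_of_all _ fun y => mul_nonneg (gaussianPDFReal_nonneg 0 1 y) (by positivity))
          ((integrable_abs_mul_exp_neg_mul_sq (by norm_num)).const_mul C).integrableOn ?_
        filter_upwards [ae_restrict_mem hS] with y hy
        exact gaussianPDFReal_zero_one_mul_rpow_abs_le hx hy hx2
    _ = C * (2 * (exp (-(1 / 4) * x ^ 2) / (2 * (1 / 4)))) := by
        rw [integral_const_mul, setIntegral_comp_abs_of_le_abs
          (f := fun t => t * exp (-(1 / 4) * t ^ 2)) hx,
          integral_Ioi_mul_exp_neg_mul_sq (by norm_num)]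
    _ = 4 * x ^ (α - 1) * Real.exp (-x ^ 2 / 2) := by
        rw [show -x ^ 2 / 2 = -(1 / 4) * x ^ 2 + -(1 / 4) * x ^ 2 by ring, exp_add]
        ring

/-- Let `Y` be a standard Gaussian. For every real `α ≥ 1` and every `x > 0` with
`x² ≥ 2(α-1)`, one has `E[|Y|^α · 1{|Y| ≥ x}] ≤ 4 x^(α-1) e^(-x²/2)`. -/
theorem gaussian_tail_moment (α x : ℝ) (hα : 1 ≤ α) (hx : 0 < x)
    (hx2 : 2 * (α - 1) ≤ x ^ 2) :
    ∫ y in {y : ℝ | x ≤ |y|}, |y| ^ α ∂(gaussianReal 0 1)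
      ≤ 4 * x ^ (α - 1) * Real.exp (-x ^ 2 / 2) :=
  gaussian_tail_moment_general α x hx hx2
end

section
/- Let t ≥ 1, let σ > 0 and τ > 0 satisfy σ^t ≤ τ, let C ≥ 1 be a real number, and let θ ∈ ℝ satisfy |θ|^t ≥ C^t τ. If X ~ N(θ, σ²), then P(|X|^t ≤ τ) ≤ exp(−(C − 1)²/2). -/
/-!
Since `σ^t ≤ τ ≤ (|θ| / C)^t`, the set `{|x|^t ≤ τ}` is the interval `|x| ≤ s := τ^(1/t)`, and it
lies at distance at least `|θ| - s ≥ (C - 1) s ≥ (C - 1) σ` from `θ`, all on one side of `θ`.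
The Chernoff bound for the sub-Gaussian variable `X - θ` bounds that one-sided tail by
`exp (-((C - 1) σ)^2 / (2 σ^2))`.
-/

open MeasureTheory ProbabilityTheory NNReal Real

lemma hasSubgaussianMGF_sub_gaussianReal (m : ℝ) (v : ℝ≥0) :
    HasSubgaussianMGF (fun x ↦ x - m) v (gaussianReal m v) where
  integrable_exp_mul t := by
    simp_rw [mul_sub, Real.exp_sub]
    exact (integrable_exp_mul_gaussianReal t).div_const _
  mgf_le t := by
    rw [mgf_gaussianReal (gaussianReal_map_sub_const m) t, sub_self, zero_mul, zero_add]

lemma gaussianReal_abs_le_le_of_add_le_abs (m : ℝ) (v : ℝ≥0) {s d : ℝ} (hd : 0 ≤ d)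
    (h : s + d ≤ |m|) :
    gaussianReal m v {x | |x| ≤ s} ≤ ENNReal.ofReal (exp (-d ^ 2 / (2 * v))) := by
  have hX := hasSubgaussianMGF_sub_gaussianReal m v
  rw [← ofReal_measureReal]
  refine ENNReal.ofReal_le_ofReal ?_
  rcases le_total 0 m with hm | hm
  · refine (measureReal_mono fun x (hx : |x| ≤ s) ↦ ?_).trans (hX.neg.measure_ge_le hd)
    rw [abs_of_nonneg hm] at h
    change d ≤ -(x - m)
    linarith [le_abs_self x]
  · refine (measureReal_mono fun x (hx : |x| ≤ s) ↦ ?_).trans (hX.measure_ge_le hd)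
    rw [abs_of_nonpos hm] at h
    change d ≤ x - m
    linarith [neg_abs_le x]

/-- If `σ^t ≤ τ`, `C ≥ 1`, `|θ|^t ≥ C^t τ` and `X ~ N(θ, σ²)`, then
`P(|X|^t ≤ τ) ≤ exp(-(C-1)²/2)`. -/
theorem gaussian_small_ball (t σ τ C θ : ℝ) (ht : 1 ≤ t) (hσ : 0 < σ) (hτ : 0 < τ)
    (hστ : σ ^ t ≤ τ) (hC : 1 ≤ C) (hθ : C ^ t * τ ≤ |θ| ^ t) :
    gaussianReal θ (σ ^ 2).toNNReal {x : ℝ | |x| ^ t ≤ τ}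
      ≤ ENNReal.ofReal (Real.exp (-(C - 1) ^ 2 / 2)) := by
  have ht0 : 0 < t := by linarith
  set s := τ ^ t⁻¹
  have hs0 : 0 ≤ s := by positivity
  have hσs : σ ≤ s := (le_rpow_inv_iff_of_pos hσ.le hτ.le ht0).2 hστ
  have hCs : C * s ≤ |θ| := by
    rwa [← rpow_le_rpow_iff (by positivity) (abs_nonneg θ) ht0,
      mul_rpow (by positivity) hs0, rpow_inv_rpow hτ.le ht0.ne']
  have hball : {x : ℝ | |x| ^ t ≤ τ} = {x | |x| ≤ s} := by
    ext x
    exact (le_rpow_inv_iff_of_pos (abs_nonneg x) hτ.le ht0).symm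
  have hvar : ((σ ^ 2).toNNReal : ℝ) = σ ^ 2 := Real.coe_toNNReal _ (sq_nonneg σ)
  calc gaussianReal θ (σ ^ 2).toNNReal {x : ℝ | |x| ^ t ≤ τ}
      ≤ ENNReal.ofReal (exp (-((C - 1) * σ) ^ 2 / (2 * ((σ ^ 2).toNNReal : ℝ)))) := by
        rw [hball]
        exact gaussianReal_abs_le_le_of_add_le_abs θ _ (by nlinarith) (by nlinarith)
    _ = ENNReal.ofReal (Real.exp (-(C - 1) ^ 2 / 2)) := by
        rw [hvar]
        field_simp
end

section
/- There exists a constant C > 0 depending only on t such that Σ_{j∈J} τ^{2−1/t} σ_j exp(−τ^{2/t}/(2σ_j²)) ≤ C ρ². -/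
open MeasureTheory

lemma aux_rpow_exp (a x : ℝ) (ha : 0 ≤ a) (hx : 0 < x) :
    x ^ a * Real.exp (-x) ≤ a ^ a := by
  rcases eq_or_lt_of_le ha with h | h
  · rw [← h]
    simp only [Real.rpow_zero, one_mul]
    exact Real.exp_le_one_iff.mpr (by linarith)
  · have hlog : Real.log (x / a) ≤ x / a - 1 :=
      Real.log_le_sub_one_of_pos (div_pos hx h)
    rw [Real.log_div (ne_of_gt hx) (ne_of_gt h)] at hlog
    have key : a * Real.log x - x ≤ a * Real.log a := by
      have h2 := mul_le_mul_of_nonneg_left hlog (le_of_lt h)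
      have hx' : a * (x / a - 1) = x - a := by field_simp
      nlinarith
    calc x ^ a * Real.exp (-x) = Real.exp (a * Real.log x - x) := by
          rw [Real.rpow_def_of_pos hx, ← Real.exp_add, mul_comm (Real.log x) a]
          ring_nf
        _ ≤ Real.exp (a * Real.log a) := Real.exp_le_exp.mpr (by linarith)
        _ = a ^ a := by rw [Real.rpow_def_of_pos h, mul_comm]

lemma per_term (t σ lam τ : ℝ) (ht : 1 ≤ t) (hσ : 0 < σ) (hlam : 0 < lam)
    (hτ : 0 < τ) (hu2 : 2 * lam ≤ τ ^ (1/t)) :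
    τ ^ (2 - 1/t) * σ * Real.exp (-(τ ^ (2/t)) / (2 * σ ^ 2)) ≤
    (Real.exp 1 * t ^ t) * (τ * (σ ^ t * Real.exp (-lam ^ 2 / σ ^ 2))) := by
  have ht0 : (0:ℝ) < t := by linarith
  set u := τ ^ (1/t) with hudef
  have hupos : 0 < u := Real.rpow_pos_of_pos hτ _
  set x := u / σ with hxdef
  have hxpos : 0 < x := div_pos hupos hσ
  have hux : u = x * σ := by rw [hxdef]; field_simp
  -- rewrite the powers of τ
  have h1 : τ ^ (2 - 1/t) = τ * u ^ (t - 1) := by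
    have e1 : u ^ (t-1) = τ ^ ((1/t) * (t-1)) := (Real.rpow_mul hτ.le _ _).symm
    have e2 : τ ^ (2 - 1/t) = τ ^ (1 + (1/t) * (t-1)) := by
      congr 1; field_simp; ring
    rw [e1, e2, Real.rpow_add hτ, Real.rpow_one]
  have h2 : τ ^ (2/t) = u * u := by
    rw [hudef, ← Real.rpow_add hτ]
    congr 1; field_simp; ring
  -- split the exponential
  have h3 : Real.exp (-(u*u) / (2 * σ ^ 2)) =
      Real.exp (-lam ^ 2 / σ ^ 2) * Real.exp (lam ^ 2 / σ ^ 2 - (u*u) / (2 * σ ^ 2)) := by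
    rw [← Real.exp_add]; congr 1; ring
  -- the key scalar bound
  have hσ2 : (0:ℝ) < σ ^ 2 := by positivity
  have hlam2 : lam ^ 2 * 4 ≤ u * u := by nlinarith
  have h4 : lam ^ 2 / σ ^ 2 ≤ x * x / 4 := by
    rw [div_le_div_iff₀ hσ2 (by norm_num)]
    nlinarith [hux]
  have h5 : (x*σ)*(x*σ) / (2 * σ ^ 2) = x * x / 2 := by
    field_simp
  have hexp : lam ^ 2 / σ ^ 2 - (u*u) / (2 * σ ^ 2) ≤ 1 - x := by
    rw [hux, h5]
    nlinarith [h4, sq_nonneg (x - 2)]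
  have hB : u ^ (t-1) * σ * Real.exp (lam ^ 2 / σ ^ 2 - (u*u) / (2 * σ ^ 2)) ≤
      Real.exp 1 * t ^ t * σ ^ t := by
    have hsplit : u ^ (t-1) = x ^ (t-1) * σ ^ (t-1) := by
      rw [hux, Real.mul_rpow hxpos.le hσ.le]
    have hσt : σ ^ (t-1) * σ = σ ^ t := by
      rw [← Real.rpow_add_one (ne_of_gt hσ)]
      ring_nf
    have hxe : x ^ (t-1) * Real.exp (-x) ≤ t ^ t := by
      calc x ^ (t-1) * Real.exp (-x) ≤ (t-1) ^ (t-1) :=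
            aux_rpow_exp _ _ (by linarith) hxpos
        _ ≤ t ^ (t-1) := Real.rpow_le_rpow (by linarith) (by linarith) (by linarith)
        _ ≤ t ^ t := Real.rpow_le_rpow_of_exponent_le ht (by linarith)
    have hexp2 : Real.exp (lam ^ 2 / σ ^ 2 - (u*u) / (2 * σ ^ 2)) ≤
        Real.exp 1 * Real.exp (-x) := by
      rw [← Real.exp_add]
      exact Real.exp_le_exp.mpr (by linarith)
    calc u ^ (t-1) * σ * Real.exp (lam ^ 2 / σ ^ 2 - (u*u) / (2 * σ ^ 2))
        ≤ u ^ (t-1) * σ * (Real.exp 1 * Real.exp (-x)) := by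
          apply mul_le_mul_of_nonneg_left hexp2
          have : 0 < u ^ (t-1) := Real.rpow_pos_of_pos hupos _
          positivity
      _ = Real.exp 1 * (x ^ (t-1) * Real.exp (-x)) * (σ ^ (t-1) * σ) := by
          rw [hsplit]; ring
      _ ≤ Real.exp 1 * t ^ t * (σ ^ (t-1) * σ) := by
          apply mul_le_mul_of_nonneg_right _ ?_
          · exact mul_le_mul_of_nonneg_left hxe (Real.exp_pos 1).le
          · have : 0 < σ ^ (t-1) := Real.rpow_pos_of_pos hσ _
            positivity
      _ = Real.exp 1 * t ^ t * σ ^ t := by rw [hσt]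
  calc τ ^ (2 - 1/t) * σ * Real.exp (-(τ ^ (2/t)) / (2 * σ ^ 2))
      = τ * (u ^ (t-1) * σ * Real.exp (lam ^ 2 / σ ^ 2 - (u*u) / (2 * σ ^ 2)))
        * Real.exp (-lam ^ 2 / σ ^ 2) := by
        rw [h1, h2, h3]; ring
    _ ≤ τ * (Real.exp 1 * t ^ t * σ ^ t) * Real.exp (-lam ^ 2 / σ ^ 2) := by
        apply mul_le_mul_of_nonneg_right _ (Real.exp_pos _).le
        exact mul_le_mul_of_nonneg_left hB hτ.le
    _ = (Real.exp 1 * t ^ t) * (τ * (σ ^ t * Real.exp (-lam ^ 2 / σ ^ 2))) := by ring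

/-- With `C_t = (4t)^t`, `τ = C_t λ^t + ν^t/s`, `ρ = s τ`, and
`Σ_j σ_j^t exp(-λ²/σ_j²) ≤ s ν^t`, there exists `C > 0` depending only on `t` with
`Σ_j τ^(2-1/t) σ_j exp(-τ^(2/t)/(2σ_j²)) ≤ C ρ²`. -/
theorem sum_tail_bound (t : ℝ) (ht : 1 ≤ t) :
    ∃ C > 0, ∀ (ι : Type) [Fintype ι] (σ : ι → ℝ) (lam ν : ℝ) (s : ℕ),
      1 ≤ s → 0 < lam → 0 < ν → (∀ j, 0 < σ j) →
      (∑ j, σ j ^ t * Real.exp (-lam ^ 2 / σ j ^ 2)) ≤ (s : ℝ) * ν ^ t →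
      ∀ τ ρ : ℝ, τ = (4 * t) ^ t * lam ^ t + ν ^ t / (s : ℝ) → ρ = (s : ℝ) * τ →
      (∑ j, τ ^ (2 - 1 / t) * σ j * Real.exp (-(τ ^ (2 / t)) / (2 * σ j ^ 2)))
        ≤ C * ρ ^ 2 := by
  have ht0 : (0:ℝ) < t := by linarith
  have htt : (0:ℝ) < t ^ t := Real.rpow_pos_of_pos ht0 t
  have hE : (0:ℝ) < Real.exp 1 * t ^ t := by positivity
  refine ⟨Real.exp 1 * t ^ t, hE, ?_⟩
  intro ι _ σ lam ν s hs hlam hν hσ hsum τ ρ hτdef hρdef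
  have hs0 : (0:ℝ) < (s:ℝ) := by exact_mod_cast hs
  have hClam : (0:ℝ) < (4 * t) ^ t * lam ^ t := by
    have h1 := Real.rpow_pos_of_pos (by linarith : (0:ℝ) < 4 * t) t
    have h2 := Real.rpow_pos_of_pos hlam t
    positivity
  have hνt : (0:ℝ) < ν ^ t := Real.rpow_pos_of_pos hν t
  have hτpos : 0 < τ := by rw [hτdef]; positivity
  have hτ1 : (2*lam) ^ t ≤ τ := by
    have h1 : (4 * t) ^ t * lam ^ t = (4 * t * lam) ^ t := by
      rw [Real.mul_rpow (by linarith) hlam.le]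
    have h2 : (2*lam) ^ t ≤ (4 * t * lam) ^ t :=
      Real.rpow_le_rpow (by linarith) (by nlinarith) ht0.le
    rw [hτdef, h1]
    have h3 : 0 < ν ^ t / (s:ℝ) := by positivity
    linarith
  have hu : 2 * lam ≤ τ ^ (1/t) := by
    have e1 : ((2*lam:ℝ) ^ t) ^ (1/t) = 2*lam := by
      rw [← Real.rpow_mul (by linarith), mul_one_div, div_self (ne_of_gt ht0),
        Real.rpow_one]
    calc 2 * lam = ((2*lam:ℝ) ^ t) ^ (1/t) := e1.symm
      _ ≤ τ ^ (1/t) := Real.rpow_le_rpow (Real.rpow_nonneg (by linarith) t) hτ1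
          (by positivity)
  have hstep : ∀ j : ι, τ ^ (2 - 1/t) * σ j * Real.exp (-(τ ^ (2/t)) / (2 * σ j ^ 2)) ≤
      (Real.exp 1 * t ^ t) * (τ * (σ j ^ t * Real.exp (-lam ^ 2 / σ j ^ 2))) :=
    fun j => per_term t (σ j) lam τ ht (hσ j) hlam hτpos hu
  have hνs : ν ^ t ≤ τ * (s:ℝ) := by
    have h1 : ν ^ t / (s:ℝ) ≤ τ := by rw [hτdef]; linarith
    exact (div_le_iff₀ hs0).mp h1
  calc (∑ j, τ ^ (2 - 1 / t) * σ j * Real.exp (-(τ ^ (2 / t)) / (2 * σ j ^ 2)))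
      ≤ ∑ j, (Real.exp 1 * t ^ t) * (τ * (σ j ^ t * Real.exp (-lam ^ 2 / σ j ^ 2))) :=
        Finset.sum_le_sum fun j _ => hstep j
    _ = (Real.exp 1 * t ^ t) * τ * (∑ j, σ j ^ t * Real.exp (-lam ^ 2 / σ j ^ 2)) := by
        rw [Finset.mul_sum]
        exact Finset.sum_congr rfl fun j _ => by ring
    _ ≤ (Real.exp 1 * t ^ t) * τ * ((s:ℝ) * ν ^ t) := by
        apply mul_le_mul_of_nonneg_left hsum (by positivity)
    _ ≤ (Real.exp 1 * t ^ t) * ρ ^ 2 := by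
        rw [hρdef]
        have key : τ * ((s:ℝ) * ν ^ t) ≤ ((s:ℝ) * τ) ^ 2 := by nlinarith
        nlinarith
end

section
/- Assume in addition that σ_j ≤ λ for every j ∈ J and that X_j ~ N(0, σ_j²) for each j ∈ J. Then there exists a constant C > 0 depending only on t such that Σ_{j∈J} E[|X_j|^{2t} · 1{|X_j|^t > τ}] ≤ C ρ². -/
/-!
The density of `N(0, v)` is `2 e^{-3x²/(8v)}` times that of `N(0, 4v)`. Splitting
`e^{-3x²/(8v)} = e^{-x²/(4v)} e^{-x²/(8v)}`, the first factor absorbs `|x|^{2t}` because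
`u^t e^{-u/c} ≤ (tc)^t`, and on `{a < |x|}` the second is at most `e^{-a²/(8v)}`; so the tail moment
is at most `2 (4tv)^t e^{-a²/(8v)}`. For `a = τ^{1/t} ≥ 4tλ` and `σ_j ≤ λ` this is at most
`2 τ σ_j^t e^{-λ²/σ_j²}`, and summing over `j` gives `2 τ s ν^t ≤ 2 ρ²`, as `ν^t ≤ s τ`.
-/
open MeasureTheory ProbabilityTheory Real
open scoped NNReal

lemma rpow_mul_exp_neg_div_le {t c u : ℝ} (ht : 0 < t) (hc : 0 < c) (hu : 0 ≤ u) :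
    u ^ t * exp (-u / c) ≤ (t * c) ^ t := by
  set r := u / (t * c)
  have hr : 0 ≤ r := by positivity
  have hu_eq : u ^ t = (t * c) ^ t * r ^ t := by
    rw [← mul_rpow (by positivity) hr, mul_div_cancel₀ u (by positivity)]
  have hr_exp : r ^ t ≤ exp (u / c - t) := calc
    r ^ t ≤ exp (r - 1) ^ t := by gcongr; linarith [add_one_le_exp (r - 1)]
    _ = exp (u / c - t) := by rw [← exp_mul]; congr 1; simp only [r]; field_simp
  calc u ^ t * exp (-u / c) = (t * c) ^ t * (r ^ t * exp (-u / c)) := by rw [hu_eq]; ring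
    _ ≤ (t * c) ^ t * (exp (u / c - t) * exp (-u / c)) := by gcongr
    _ = (t * c) ^ t * exp (-t) := by rw [← exp_add]; ring_nf
    _ ≤ (t * c) ^ t := mul_le_of_le_one_right (by positivity) (exp_le_one_iff.mpr (by linarith))

lemma gaussianPDFReal_eq_two_mul_exp_mul_gaussianPDFReal_four_mul {v : ℝ≥0} (hv : v ≠ 0)
    (μ x : ℝ) :
    gaussianPDFReal μ v x
      = 2 * exp (-3 * (x - μ) ^ 2 / (8 * v)) * gaussianPDFReal μ (4 * v) x := by
  have hv' : (0 : ℝ) < v := by positivity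
  have hsqrt : √(2 * π * ((4 * v : ℝ≥0) : ℝ)) = 2 * √(2 * π * v) := by
    rw [NNReal.coe_mul, show 2 * π * ((4 : ℝ≥0) * v : ℝ) = 2 ^ 2 * (2 * π * v) by push_cast; ring,
      sqrt_mul (by positivity), sqrt_sq zero_le_two]
  rw [gaussianPDFReal, gaussianPDFReal, hsqrt, mul_inv, NNReal.coe_mul, NNReal.coe_ofNat]
  have hexp : exp (-(x - μ) ^ 2 / (2 * v))
      = exp (-3 * (x - μ) ^ 2 / (8 * v)) * exp (-(x - μ) ^ 2 / (2 * (4 * v))) := by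
    rw [← exp_add]; congr 1; field_simp; ring
  rw [hexp]
  field_simp

lemma gaussianPDFReal_mul_abs_rpow_le {t a x : ℝ} {v : ℝ≥0} (ht : 0 < t) (hv : v ≠ 0)
    (ha : 0 ≤ a) (hx : a < |x|) :
    gaussianPDFReal 0 v x * |x| ^ (2 * t)
      ≤ 2 * (4 * t * v) ^ t * exp (-a ^ 2 / (8 * v)) * gaussianPDFReal 0 (4 * v) x := by
  have hv' : (0 : ℝ) < v := by positivity
  have hsplit :
      exp (-3 * x ^ 2 / (8 * v)) = exp (-x ^ 2 / (4 * v)) * exp (-x ^ 2 / (8 * v)) := by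
    rw [← exp_add]; congr 1; field_simp; ring
  have hmoment : |x| ^ (2 * t) * exp (-x ^ 2 / (4 * v)) ≤ (4 * t * v) ^ t := by
    rw [rpow_mul (abs_nonneg x), rpow_two, sq_abs, show 4 * t * (v : ℝ) = t * (4 * v) by ring]
    exact rpow_mul_exp_neg_div_le ht (by positivity) (sq_nonneg x)
  have htail : exp (-x ^ 2 / (8 * v)) ≤ exp (-a ^ 2 / (8 * v)) := by
    have hax : a ^ 2 ≤ x ^ 2 := by
      rw [← sq_abs x]
      exact pow_le_pow_left₀ ha hx.le 2
    gcongr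
  calc gaussianPDFReal 0 v x * |x| ^ (2 * t)
      = 2 * (|x| ^ (2 * t) * exp (-x ^ 2 / (4 * v))) * exp (-x ^ 2 / (8 * v))
          * gaussianPDFReal 0 (4 * v) x := by
        rw [gaussianPDFReal_eq_two_mul_exp_mul_gaussianPDFReal_four_mul hv, sub_zero, hsplit]
        ring
    _ ≤ 2 * (4 * t * v) ^ t * exp (-a ^ 2 / (8 * v)) * gaussianPDFReal 0 (4 * v) x := by
        have := gaussianPDFReal_nonneg 0 (4 * v) x
        gcongr

lemma gaussianReal_tail_moment_le {t a : ℝ} {v : ℝ≥0} (ht : 0 < t) (hv : v ≠ 0)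
    (ha : 0 ≤ a) :
    ∫ x in {x | a < |x|}, |x| ^ (2 * t) ∂gaussianReal 0 v
      ≤ 2 * (4 * t * v) ^ t * exp (-a ^ 2 / (8 * v)) := by
  set K := 2 * (4 * t * v) ^ t * exp (-a ^ 2 / (8 * v))
  have hS : MeasurableSet {x : ℝ | a < |x|} := measurableSet_lt measurable_const measurable_abs
  rw [← integral_indicator hS, integral_gaussianReal_eq_integral_smul hv]
  calc ∫ x, gaussianPDFReal 0 v x • {x | a < |x|}.indicator (fun x ↦ |x| ^ (2 * t)) x
      ≤ ∫ x, K * gaussianPDFReal 0 (4 * v) x := by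
        refine integral_mono_of_nonneg (ae_of_all _ fun x ↦ ?_)
          ((integrable_gaussianPDFReal 0 _).const_mul K) (ae_of_all _ fun x ↦ ?_)
        · exact smul_nonneg (gaussianPDFReal_nonneg 0 v x)
            (Set.indicator_nonneg (fun x _ ↦ by positivity) x)
        · simp only [smul_eq_mul, Set.indicator]
          split_ifs with hx
          · exact gaussianPDFReal_mul_abs_rpow_le ht hv ha hx
          · have := gaussianPDFReal_nonneg 0 (4 * v) x
            simp only [mul_zero]; positivity
    _ = K := by
        rw [integral_const_mul, integral_gaussianPDFReal_eq_one 0 (mul_ne_zero four_ne_zero hv),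
          mul_one]

lemma gaussianReal_truncated_moment_le {t σ lam τ : ℝ} (ht : 1 ≤ t) (hσ : 0 < σ)
    (hσlam : σ ≤ lam) (hτ : (4 * t) ^ t * lam ^ t ≤ τ) :
    ∫ x in {x : ℝ | τ < |x| ^ t}, |x| ^ (2 * t) ∂gaussianReal 0 (σ ^ 2).toNNReal
      ≤ 2 * τ * (σ ^ t * exp (-lam ^ 2 / σ ^ 2)) := by
  have ht0 : 0 < t := by linarith
  have hlam : 0 < lam := hσ.trans_le hσlam
  have hτ0 : 0 < τ := lt_of_lt_of_le (by positivity) hτ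
  set a := τ ^ t⁻¹
  have ha : 0 < a := by positivity
  have hat : a ^ t = τ := rpow_inv_rpow hτ0.le ht0.ne'
  have hset : {x : ℝ | τ < |x| ^ t} = {x | a < |x|} := by
    ext x
    show τ < |x| ^ t ↔ a < |x|
    rw [← hat, rpow_lt_rpow_iff ha.le (abs_nonneg x) ht0]
  have ha_large : 4 * lam ≤ a := by
    refine (rpow_le_rpow_iff (by positivity) ha.le ht0).mp ?_
    calc (4 * lam) ^ t ≤ (4 * t * lam) ^ t := by gcongr; nlinarith
      _ ≤ a ^ t := by rw [hat, mul_rpow (by positivity) hlam.le]; exact hτ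
  have hv : (σ ^ 2).toNNReal ≠ 0 := (Real.toNNReal_pos.mpr (by positivity)).ne'
  have hvσ : ((σ ^ 2).toNNReal : ℝ) = σ ^ 2 := Real.coe_toNNReal _ (sq_nonneg σ)
  have hmoment : (4 * t * σ ^ 2) ^ t ≤ τ * σ ^ t := calc
    (4 * t * σ ^ 2) ^ t = (4 * t) ^ t * σ ^ t * σ ^ t := by
      rw [mul_rpow (by positivity) (by positivity), sq, mul_rpow hσ.le hσ.le, mul_assoc]
    _ ≤ (4 * t) ^ t * lam ^ t * σ ^ t := by gcongr
    _ ≤ τ * σ ^ t := by gcongr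
  have htail : exp (-a ^ 2 / (8 * σ ^ 2)) ≤ exp (-lam ^ 2 / σ ^ 2) := by
    have ha_sq : 8 * lam ^ 2 ≤ a ^ 2 := by nlinarith
    rw [exp_le_exp, div_le_div_iff₀ (by positivity) (by positivity)]
    nlinarith [mul_le_mul_of_nonneg_right ha_sq (sq_nonneg σ)]
  calc ∫ x in {x : ℝ | τ < |x| ^ t}, |x| ^ (2 * t) ∂gaussianReal 0 (σ ^ 2).toNNReal
      ≤ 2 * (4 * t * σ ^ 2) ^ t * exp (-a ^ 2 / (8 * σ ^ 2)) := by
        rw [hset]; simpa only [hvσ] using gaussianReal_tail_moment_le ht0 hv ha.le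
    _ ≤ 2 * (τ * σ ^ t) * exp (-lam ^ 2 / σ ^ 2) := by gcongr
    _ = 2 * τ * (σ ^ t * exp (-lam ^ 2 / σ ^ 2)) := by ring

/-- With `C_t = (4t)^t`, `τ = C_t λ^t + ν^t/s`, `ρ = s τ`, `σ_j ≤ λ`,
`Σ_j σ_j^t exp(-λ²/σ_j²) ≤ s ν^t`, and `X_j ~ N(0, σ_j²)`, there exists `C > 0`
depending only on `t` with `Σ_j E[|X_j|^(2t) 1{|X_j|^t > τ}] ≤ C ρ²`. -/
theorem sum_truncated_moment_bound (t : ℝ) (ht : 1 ≤ t) :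
    ∃ C > 0, ∀ (ι : Type) [Fintype ι] (σ : ι → ℝ) (lam ν : ℝ) (s : ℕ),
      1 ≤ s → 0 < lam → 0 < ν → (∀ j, 0 < σ j) → (∀ j, σ j ≤ lam) →
      (∑ j, σ j ^ t * Real.exp (-lam ^ 2 / σ j ^ 2)) ≤ (s : ℝ) * ν ^ t →
      ∀ τ ρ : ℝ, τ = (4 * t) ^ t * lam ^ t + ν ^ t / (s : ℝ) → ρ = (s : ℝ) * τ →
      (∑ j, ∫ x in {x : ℝ | τ < |x| ^ t}, |x| ^ (2 * t)
          ∂(gaussianReal 0 ((σ j) ^ 2).toNNReal))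
        ≤ C * ρ ^ 2 := by
  refine ⟨2, two_pos, fun ι _ σ lam ν s hs hlam hν hσ hσlam hsum τ ρ hτ hρ ↦ ?_⟩
  have hs0 : (0 : ℝ) < s := by exact_mod_cast hs
  have hτ_ge : (4 * t) ^ t * lam ^ t ≤ τ := by
    rw [hτ]; linarith [show 0 < ν ^ t / s by positivity]
  have hν_le : ν ^ t ≤ s * τ := by
    rw [hτ, mul_add, mul_div_cancel₀ _ hs0.ne']
    linarith [show 0 ≤ s * ((4 * t) ^ t * lam ^ t) by positivity]
  have hτ0 : 0 ≤ τ := le_trans (by positivity) hτ_ge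
  calc (∑ j, ∫ x in {x : ℝ | τ < |x| ^ t}, |x| ^ (2 * t) ∂gaussianReal 0 (σ j ^ 2).toNNReal)
      ≤ ∑ j, 2 * τ * (σ j ^ t * exp (-lam ^ 2 / σ j ^ 2)) := Finset.sum_le_sum fun j _ ↦
        gaussianReal_truncated_moment_le ht (hσ j) (hσlam j) hτ_ge
    _ = 2 * τ * ∑ j, σ j ^ t * exp (-lam ^ 2 / σ j ^ 2) := by rw [Finset.mul_sum]
    _ ≤ 2 * τ * (s * (s * τ)) := by gcongr; exact hsum.trans (by gcongr)
    _ = 2 * ρ ^ 2 := by rw [hρ]; ring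
end

section
/- Assume in addition that σ_j ≤ λ for every j ∈ J, that X_j ~ N(0, σ_j²) independently for j ∈ J, and set α_j = E[|X_j|^t | |X_j|^t > τ]. Then there exists a constant C > 0 depending only on t such that Σ_{j∈J} Var[ (|X_j|^t − α_j) · 1{|X_j|^t > τ} ] ≤ C ρ²; moreover each summand (|X_j|^t − α_j) 1{|X_j|^t > τ} has mean zero. -/
/-!
The variance of the centred indicator `1_S (|x|^t - α)` is at most the tail second moment
`∫_S |x|^{2t}`, because `α` is the conditional mean of `|x|^t` on `S = {|x|^t > τ}`.
Since `(4tλ)^t ≤ τ`, the event `S` forces `|x| ≥ 4λ`; bounding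
`|x|^{2t} ≤ e^{8t²} σ^{2t} e^{x²/(8σ²)}` and `1_S ≤ e^{(x² - 16λ²)/(4σ²)}` leaves the
Gaussian integral `E[e^{3X²/(8σ²)}] = 2`, so the tail moment is at most
`2 e^{8t²} λ^t σ^t e^{-λ²/σ²}`. Summing over `j` and using `λ^t ≤ τ`, `ν^t ≤ sτ` gives
`C = 2 e^{8t²}`.
-/

open MeasureTheory ProbabilityTheory Real
open scoped NNReal

section ConditionalMean

variable {Ω : Type*} {mΩ : MeasurableSpace Ω} {μ : Measure Ω} [IsFiniteMeasure μ]
  {S : Set Ω} {f : Ω → ℝ} {α : ℝ}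

lemma mul_measureReal_eq_setIntegral_of_eq_div
    (hα : α = (∫ x in S, f x ∂μ) / μ.real S) : α * μ.real S = ∫ x in S, f x ∂μ := by
  rcases eq_or_ne (μ.real S) 0 with h | h
  -- here `α = 0` by the convention `x / 0 = 0`, but both sides vanish anyway
  · rw [h, mul_zero, Measure.restrict_eq_zero.2 ((measureReal_eq_zero_iff).1 h),
      integral_zero_measure]
  · rw [hα, div_mul_cancel₀ _ h]

lemma integral_indicator_sub_eq_zero_of_eq_div (hS : MeasurableSet S)
    (hf : IntegrableOn f S μ) (hα : α = (∫ x in S, f x ∂μ) / μ.real S) :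
    ∫ x, S.indicator (fun y => f y - α) x ∂μ = 0 := by
  rw [integral_indicator hS, integral_sub hf (integrableOn_const (measure_ne_top μ S)),
    setIntegral_const, smul_eq_mul, mul_comm, mul_measureReal_eq_setIntegral_of_eq_div hα,
    sub_self]

lemma variance_indicator_sub_le_of_eq_div (hS : MeasurableSet S) (hf : MemLp f 2 μ)
    (hα : α = (∫ x in S, f x ∂μ) / μ.real S) :
    variance (S.indicator fun y => f y - α) μ ≤ ∫ x in S, f x ^ 2 ∂μ := by
  have hf1 : IntegrableOn f S μ := (hf.integrable one_le_two).integrableOn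
  have hf2 : IntegrableOn (fun x => f x ^ 2) S μ := hf.integrable_sq.integrableOn
  have hc : IntegrableOn (fun _ => α) S μ := integrableOn_const (measure_ne_top μ S)
  have hZ : AEMeasurable (S.indicator fun y => f y - α) μ :=
    ((hf1.sub hc).integrable_indicator hS).aemeasurable
  rw [variance_of_integral_eq_zero hZ (integral_indicator_sub_eq_zero_of_eq_div hS hf1 hα)]
  calc ∫ x, S.indicator (fun y => f y - α) x ^ 2 ∂μ
      = ∫ x in S, (f x ^ 2 - 2 * α * f x + α ^ 2) ∂μ := by
        rw [← integral_indicator hS]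
        congr 1 with x
        by_cases hx : x ∈ S <;> simp [hx]; ring
    _ = ∫ x in S, f x ^ 2 ∂μ - α * (2 * (∫ x in S, f x ∂μ) - α * μ.real S) := by
        have hf1' : IntegrableOn (fun x => 2 * α * f x) S μ := hf1.const_mul _
        have h3 : IntegrableOn (fun x => f x ^ 2 - 2 * α * f x) S μ := hf2.sub hf1'
        rw [integral_add h3 (integrableOn_const (measure_ne_top μ S)), integral_sub hf2 hf1',
          integral_const_mul, setIntegral_const, smul_eq_mul]
        ring
    _ ≤ ∫ x in S, f x ^ 2 ∂μ := by
        rw [← mul_measureReal_eq_setIntegral_of_eq_div hα]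
        nlinarith [sq_nonneg α, measureReal_nonneg (μ := μ) (s := S)]

end ConditionalMean

section GaussianMoments

variable {v : ℝ≥0} {a : ℝ}

lemma gaussianPDFReal_zero_mul_exp_mul_sq (hv : v ≠ 0) (x : ℝ) :
    gaussianPDFReal 0 v x * exp (a * x ^ 2)
      = (√(2 * π * v))⁻¹ * exp (-((1 - 2 * a * v) / (2 * v)) * x ^ 2) := by
  have hv' : (v : ℝ) ≠ 0 := by exact_mod_cast hv
  rw [gaussianPDFReal, mul_assoc, ← exp_add]
  congr 2
  field_simp
  ring

lemma integrable_exp_mul_sq_gaussianReal (ha : 2 * a * v < 1) :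
    Integrable (fun x => exp (a * x ^ 2)) (gaussianReal 0 v) := by
  rcases eq_or_ne v 0 with rfl | hv
  · exact gaussianReal_zero_var (0 : ℝ) ▸ integrable_dirac enorm_lt_top
  have hv' : (0 : ℝ) < v := by positivity
  rw [gaussianReal_of_var_ne_zero _ hv, integrable_withDensity_iff_integrable_smul'
    (measurable_gaussianPDF 0 v) (ae_of_all _ fun _ => gaussianPDF_lt_top)]
  refine ((integrable_exp_neg_mul_sq (b := (1 - 2 * a * v) / (2 * v))
    (by apply div_pos <;> linarith)).const_mul (√(2 * π * v))⁻¹).congr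
    (ae_of_all _ fun x => ?_)
  simp only [toReal_gaussianPDF, smul_eq_mul, gaussianPDFReal_zero_mul_exp_mul_sq hv]

lemma integral_exp_mul_sq_gaussianReal (ha : 2 * a * v < 1) :
    ∫ x, exp (a * x ^ 2) ∂gaussianReal 0 v = (√(1 - 2 * a * v))⁻¹ := by
  rcases eq_or_ne v 0 with rfl | hv
  · simp [gaussianReal_zero_var]
  have hv' : (0 : ℝ) < v := by positivity
  simp_rw [integral_gaussianReal_eq_integral_smul hv, smul_eq_mul,
    gaussianPDFReal_zero_mul_exp_mul_sq hv, integral_const_mul, integral_gaussian]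
  rw [← sqrt_inv, ← sqrt_inv, ← sqrt_mul (by positivity)]
  congr 1
  field_simp

lemma integrable_abs_rpow_gaussianReal {μ : ℝ} {p : ℝ} (hp : 0 ≤ p) :
    Integrable (fun x => |x| ^ p) (gaussianReal μ v) := by
  simpa [hp] using (memLp_id_gaussianReal' (μ := μ) (v := v) (ENNReal.ofReal p)
    ENNReal.ofReal_ne_top).integrable_norm_rpow'

lemma memLp_abs_rpow_gaussianReal {μ : ℝ} {p : ℝ} (hp : 0 ≤ p) :
    MemLp (fun x => |x| ^ p) 2 (gaussianReal μ v) := by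
  refine (memLp_two_iff_integrable_sq (by fun_prop)).2 ?_
  refine (integrable_abs_rpow_gaussianReal (μ := μ) (v := v) (by positivity : 0 ≤ p * 2)).congr
    (ae_of_all _ fun x => ?_)
  exact_mod_cast rpow_mul_natCast (abs_nonneg x) p 2

end GaussianMoments

lemma rpow_le_exp_two_mul_sq_add_sq_div_eight {r p : ℝ} (hr : 0 ≤ r) (hp : 0 ≤ p) :
    r ^ p ≤ exp (2 * p ^ 2 + r ^ 2 / 8) := by
  rcases hr.eq_or_lt with rfl | hr
  · rcases hp.eq_or_lt with rfl | hp
    · simp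
    · rw [zero_rpow hp.ne']; positivity
  rw [rpow_def_of_pos hr, exp_le_exp]
  -- `p log r ≤ p (r - 1)`, and `p r ≤ 2 p² + r² / 8` by AM-GM
  nlinarith [sq_nonneg (r - 4 * p), mul_le_mul_of_nonneg_left (log_le_sub_one_of_pos hr) hp]

lemma abs_rpow_le_exp_mul_rpow_mul_exp {σ p : ℝ} (hσ : 0 < σ) (hp : 0 ≤ p) (x : ℝ) :
    |x| ^ p ≤ exp (2 * p ^ 2) * σ ^ p * exp (x ^ 2 / (8 * σ ^ 2)) := by
  calc |x| ^ p = σ ^ p * (|x| / σ) ^ p := by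
        rw [← mul_rpow hσ.le (by positivity), mul_div_cancel₀ _ hσ.ne']
    _ ≤ σ ^ p * exp (2 * p ^ 2 + (|x| / σ) ^ 2 / 8) := by
        gcongr; exact rpow_le_exp_two_mul_sq_add_sq_div_eight (by positivity) hp
    _ = exp (2 * p ^ 2) * σ ^ p * exp (x ^ 2 / (8 * σ ^ 2)) := by
        rw [exp_add, div_pow, sq_abs]; ring_nf

lemma setIntegral_abs_rpow_gaussianReal_le {σ a p : ℝ} {S : Set ℝ} (hσ : 0 < σ)
    (hp : 0 ≤ p) (ha : 0 ≤ a) (hS : MeasurableSet S) (haS : ∀ x ∈ S, a ≤ |x|) :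
    ∫ x in S, |x| ^ p ∂gaussianReal 0 (σ ^ 2).toNNReal
      ≤ 2 * exp (2 * p ^ 2) * σ ^ p * exp (-a ^ 2 / (4 * σ ^ 2)) := by
  set K := exp (2 * p ^ 2) * σ ^ p * exp (-a ^ 2 / (4 * σ ^ 2))
  have hv : (((σ ^ 2).toNNReal : ℝ≥0) : ℝ) = σ ^ 2 := coe_toNNReal _ (by positivity)
  have hb : 2 * (3 / (8 * σ ^ 2)) * (σ ^ 2).toNNReal < 1 := by
    rw [hv]; field_simp; norm_num
  -- on `S`, the factor `exp ((x² - a²) / (4σ²)) ≥ 1` pays for restricting to the tail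
  have hbound : ∀ x, S.indicator (fun x => |x| ^ p) x ≤ K * exp (3 / (8 * σ ^ 2) * x ^ 2) := by
    intro x
    by_cases hx : x ∈ S
    · have hax : a ^ 2 ≤ x ^ 2 := sq_abs x ▸ pow_le_pow_left₀ ha (haS x hx) 2
      calc S.indicator (fun x => |x| ^ p) x
          ≤ exp (2 * p ^ 2) * σ ^ p * exp (x ^ 2 / (8 * σ ^ 2)) * 1 := by
            rw [Set.indicator_of_mem hx, mul_one]
            exact abs_rpow_le_exp_mul_rpow_mul_exp hσ hp x
        _ ≤ exp (2 * p ^ 2) * σ ^ p * exp (x ^ 2 / (8 * σ ^ 2))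
              * exp ((x ^ 2 - a ^ 2) / (4 * σ ^ 2)) := by
            gcongr; exact one_le_exp (by apply div_nonneg <;> nlinarith)
        _ = K * exp (3 / (8 * σ ^ 2) * x ^ 2) := by
            simp only [K, mul_assoc, ← exp_add]
            congr 3
            field_simp
            ring
    · rw [Set.indicator_of_notMem hx]; positivity
  calc ∫ x in S, |x| ^ p ∂gaussianReal 0 (σ ^ 2).toNNReal
      = ∫ x, S.indicator (fun x => |x| ^ p) x ∂gaussianReal 0 (σ ^ 2).toNNReal :=
        (integral_indicator hS).symm
    _ ≤ ∫ x, K * exp (3 / (8 * σ ^ 2) * x ^ 2) ∂gaussianReal 0 (σ ^ 2).toNNReal :=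
        integral_mono_of_nonneg
          (ae_of_all _ fun x => Set.indicator_nonneg (fun x _ => by positivity) x)
          ((integrable_exp_mul_sq_gaussianReal hb).const_mul K) (ae_of_all _ hbound)
    _ = 2 * K := by
        rw [integral_const_mul, integral_exp_mul_sq_gaussianReal hb, hv,
          show 1 - 2 * (3 / (8 * σ ^ 2)) * σ ^ 2 = (1 / 2) ^ 2 by field_simp; norm_num,
          sqrt_sq (by norm_num)]
        ring
    _ = 2 * exp (2 * p ^ 2) * σ ^ p * exp (-a ^ 2 / (4 * σ ^ 2)) := by ring

lemma variance_indicator_rpow_sub_gaussianReal_le {t σ lam τ α : ℝ} (ht : 1 ≤ t)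
    (hσ : 0 < σ) (hσlam : σ ≤ lam) (hτ : (4 * t) ^ t * lam ^ t ≤ τ)
    (hα : α = (∫ x in {x : ℝ | τ < |x| ^ t}, |x| ^ t ∂gaussianReal 0 (σ ^ 2).toNNReal) /
      (gaussianReal 0 (σ ^ 2).toNNReal).real {x : ℝ | τ < |x| ^ t}) :
    variance ({y : ℝ | τ < |y| ^ t}.indicator fun y => |y| ^ t - α)
        (gaussianReal 0 (σ ^ 2).toNNReal)
      ≤ 2 * exp (8 * t ^ 2) * lam ^ t * (σ ^ t * exp (-lam ^ 2 / σ ^ 2)) := by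
  have ht0 : 0 < t := by linarith
  have hlam : 0 < lam := hσ.trans_le hσlam
  have hS : MeasurableSet {x : ℝ | τ < |x| ^ t} :=
    measurableSet_lt measurable_const (by fun_prop)
  have htail : ∀ x ∈ {x : ℝ | τ < |x| ^ t}, 4 * lam ≤ |x| := by
    intro x hx
    have : 4 * t * lam < |x| := by
      rw [← rpow_lt_rpow_iff (by positivity) (abs_nonneg x) ht0, mul_rpow (by positivity) hlam.le]
      exact hτ.trans_lt hx
    nlinarith
  calc variance ({y : ℝ | τ < |y| ^ t}.indicator fun y => |y| ^ t - α)
        (gaussianReal 0 (σ ^ 2).toNNReal)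
      ≤ ∫ x in {x : ℝ | τ < |x| ^ t}, (|x| ^ t) ^ 2 ∂gaussianReal 0 (σ ^ 2).toNNReal :=
        variance_indicator_sub_le_of_eq_div hS (memLp_abs_rpow_gaussianReal ht0.le) hα
    _ = ∫ x in {x : ℝ | τ < |x| ^ t}, |x| ^ (t * 2) ∂gaussianReal 0 (σ ^ 2).toNNReal := by
        congr 1 with x
        exact_mod_cast (rpow_mul_natCast (abs_nonneg x) t 2).symm
    _ ≤ 2 * exp (2 * (t * 2) ^ 2) * σ ^ (t * 2) * exp (-(4 * lam) ^ 2 / (4 * σ ^ 2)) :=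
        setIntegral_abs_rpow_gaussianReal_le hσ (by positivity) (by positivity) hS htail
    _ ≤ 2 * exp (8 * t ^ 2) * lam ^ t * (σ ^ t * exp (-lam ^ 2 / σ ^ 2)) := by
        rw [mul_two, rpow_add hσ]
        have hσt : σ ^ t ≤ lam ^ t := rpow_le_rpow hσ.le hσlam ht0.le
        have hexp : -(4 * lam) ^ 2 / (4 * σ ^ 2) ≤ -lam ^ 2 / σ ^ 2 := by
          rw [div_le_div_iff₀ (by positivity) (by positivity)]
          nlinarith [sq_nonneg lam, sq_nonneg σ, mul_pos (pow_pos hlam 2) (pow_pos hσ 2)]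
        calc 2 * exp (2 * (t + t) ^ 2) * (σ ^ t * σ ^ t) * exp (-(4 * lam) ^ 2 / (4 * σ ^ 2))
            = 2 * exp (8 * t ^ 2) * σ ^ t * (σ ^ t * exp (-(4 * lam) ^ 2 / (4 * σ ^ 2))) := by
              ring_nf
          _ ≤ 2 * exp (8 * t ^ 2) * lam ^ t * (σ ^ t * exp (-lam ^ 2 / σ ^ 2)) := by
              gcongr

/-- Under `H₀` (`X_j ~ N(0, σ_j²)`, `σ_j ≤ λ`), with `τ = (4t)^t λ^t + ν^t/s`,
`ρ = s τ` and `α_j = E[|X_j|^t | |X_j|^t > τ]`, each summand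
`(|X_j|^t - α_j) 1{|X_j|^t > τ}` is centered and the sum of their variances is
at most `C ρ²` for some `C > 0` depending only on `t`. -/
theorem variance_sum_H0 (t : ℝ) (ht : 1 ≤ t) :
    ∃ C > 0, ∀ (ι : Type) [Fintype ι] (σ : ι → ℝ) (lam ν : ℝ) (s : ℕ),
      1 ≤ s → 0 < lam → 0 < ν → (∀ j, 0 < σ j) → (∀ j, σ j ≤ lam) →
      (∑ j, σ j ^ t * Real.exp (-lam ^ 2 / σ j ^ 2)) ≤ (s : ℝ) * ν ^ t →
      ∀ τ ρ : ℝ, τ = (4 * t) ^ t * lam ^ t + ν ^ t / (s : ℝ) → ρ = (s : ℝ) * τ →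
      ∀ α : ι → ℝ,
      (∀ j, α j =
        (∫ x in {x : ℝ | τ < |x| ^ t}, |x| ^ t ∂(gaussianReal 0 ((σ j) ^ 2).toNNReal)) /
          ((gaussianReal 0 ((σ j) ^ 2).toNNReal) {x : ℝ | τ < |x| ^ t}).toReal) →
      (∀ j, (∫ x, {y : ℝ | τ < |y| ^ t}.indicator (fun y => |y| ^ t - α j) x
          ∂(gaussianReal 0 ((σ j) ^ 2).toNNReal)) = 0) ∧
      (∑ j, variance ({y : ℝ | τ < |y| ^ t}.indicator (fun y => |y| ^ t - α j))
          (gaussianReal 0 ((σ j) ^ 2).toNNReal))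
        ≤ C * ρ ^ 2 := by
  refine ⟨2 * exp (8 * t ^ 2), by positivity, ?_⟩
  intro ι _ σ lam ν s hs hlam hν hσ hσlam hsum τ ρ hτ hρ α hα
  have hs' : (0 : ℝ) < s := by exact_mod_cast hs
  have hlamτ : (4 * t) ^ t * lam ^ t ≤ τ := by
    rw [hτ]; exact le_add_of_nonneg_right (by positivity)
  have hτ0 : 0 ≤ τ := (by positivity : (0 : ℝ) ≤ (4 * t) ^ t * lam ^ t).trans hlamτ
  refine ⟨fun j => integral_indicator_sub_eq_zero_of_eq_div
    (measurableSet_lt measurable_const (by fun_prop))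
    (integrable_abs_rpow_gaussianReal (by linarith)).integrableOn (hα j), ?_⟩
  have hlam_le : lam ^ t ≤ τ :=
    (le_mul_of_one_le_left (by positivity) (one_le_rpow (by linarith) (by linarith))).trans hlamτ
  have hν_le : ν ^ t ≤ s * τ := by
    rw [hτ, mul_add, mul_div_cancel₀ _ hs'.ne']
    exact le_add_of_nonneg_left (by positivity)
  calc ∑ j, variance ({y : ℝ | τ < |y| ^ t}.indicator (fun y => |y| ^ t - α j))
          (gaussianReal 0 ((σ j) ^ 2).toNNReal)
      ≤ ∑ j, 2 * exp (8 * t ^ 2) * lam ^ t * (σ j ^ t * exp (-lam ^ 2 / σ j ^ 2)) :=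
        Finset.sum_le_sum fun j _ =>
          variance_indicator_rpow_sub_gaussianReal_le ht (hσ j) (hσlam j) hlamτ (hα j)
    _ = 2 * exp (8 * t ^ 2) * (lam ^ t * ∑ j, σ j ^ t * exp (-lam ^ 2 / σ j ^ 2)) := by
        rw [← Finset.mul_sum, mul_assoc]
    _ ≤ 2 * exp (8 * t ^ 2) * (τ * (s * (s * τ))) := by
        refine mul_le_mul_of_nonneg_left (mul_le_mul hlam_le ?_ ?_ hτ0) (by positivity)
        · exact hsum.trans (mul_le_mul_of_nonneg_left hν_le hs'.le)
        · exact Finset.sum_nonneg fun j _ => mul_nonneg (rpow_nonneg (hσ j).le _) (exp_pos _).le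
    _ = 2 * exp (8 * t ^ 2) * ρ ^ 2 := by rw [hρ]; ring
end

section
/- Let t ≥ 1 and ε > 0. There exists B ≥ 1, depending only on t and ε, such that: for all σ > 0 and τ > 0 with σ^t ≤ τ, and all θ ∈ ℝ with |θ|^t ≥ B τ, if X ~ N(θ, σ²) and ζ = 1{|X|^t ≥ τ}, then E[|X|^{2t} ζ] − ( E[|X|^t ζ] )² ≤ ε |θ|^{2t}. -/
/-!
Write `m = |θ|^t`. For any constant `m`, the truncated second moment gap is at most
`E[(|X|^t - m)^2] + m^2 P(|X|^t < τ)`. Once `σ ≤ β|θ|` (which `|θ|^t ≥ β^{-t} τ ≥ β^{-t} σ^t`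
forces), the mean value bound for `r ↦ r^t` gives `||X|^t - m| ≤ t β m (1 + |Z|)^t` with
`Z = (X - θ)/σ` standard normal, and the event `|X|^t < τ` forces `|X| < β|θ|`, hence
`2β|Z| ≥ 1`, so its probability is at most `4β^2` by Chebyshev. Both terms are `O(β^2 m^2)`
with constants depending only on `t`, and `β` is chosen small in terms of `t` and `ε`.
-/

open MeasureTheory ProbabilityTheory

lemma rpow_two_mul {x : ℝ} (hx : 0 ≤ x) (t : ℝ) : x ^ (2 * t) = (x ^ t) ^ 2 := by
  rw [mul_comm, Real.rpow_mul hx, Real.rpow_two]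

lemma rpow_sub_one_le {r t : ℝ} (ht : 1 ≤ t) (hr : 1 ≤ r) :
    r ^ t - 1 ≤ t * r ^ (t - 1) * (r - 1) := by
  have hr0 : 0 < r := by linarith
  have h := one_add_mul_self_le_rpow_one_add (s := r⁻¹ - 1)
    (by linarith [inv_nonneg.2 hr0.le]) ht
  rw [add_sub_cancel, Real.inv_rpow hr0.le] at h
  have h2 := mul_le_mul_of_nonneg_left h (Real.rpow_nonneg hr0.le t)
  rw [mul_inv_cancel₀ (Real.rpow_pos_of_pos hr0 t).ne'] at h2
  rw [Real.rpow_sub_one hr0.ne']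
  linear_combination h2 - t * r ^ t * mul_inv_cancel₀ hr0.ne'

lemma abs_rpow_sub_one_le {r s t : ℝ} (ht : 1 ≤ t) (hr : 0 ≤ r) (hrs : |r - 1| ≤ s) :
    |r ^ t - 1| ≤ t * s * (1 + s) ^ (t - 1) := by
  have hs : 0 ≤ s := (abs_nonneg _).trans hrs
  have hts : t * s ≤ t * s * (1 + s) ^ (t - 1) :=
    le_mul_of_one_le_right (by positivity) (Real.one_le_rpow (by linarith) (by linarith))
  rw [abs_le] at hrs ⊢
  constructor
  · have bernoulli := one_add_mul_self_le_rpow_one_add (s := r - 1) (by linarith) ht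
    rw [add_sub_cancel] at bernoulli
    nlinarith
  · rcases le_total r 1 with hr1 | hr1
    · have : r ^ t ≤ 1 := Real.rpow_le_one hr hr1 (by linarith)
      have : 0 ≤ t * s * (1 + s) ^ (t - 1) := by positivity
      linarith
    · calc r ^ t - 1 ≤ t * r ^ (t - 1) * (r - 1) := rpow_sub_one_le ht hr1
        _ ≤ t * (1 + s) ^ (t - 1) * s := by
          gcongr
          · linarith
          · linarith
        _ = t * s * (1 + s) ^ (t - 1) := by ring

lemma abs_rpow_sub_rpow_le {a b t β w : ℝ} (ht : 1 ≤ t) (ha : 0 ≤ a) (hb : 0 < b) (hβ0 : 0 ≤ β)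
    (hβ1 : β ≤ 1) (hw : 0 ≤ w) (hab : |a - b| ≤ β * w * b) :
    |a ^ t - b ^ t| ≤ t * β * (1 + w) ^ t * b ^ t := by
  have hr : |a / b - 1| ≤ β * w := by
    rwa [div_sub_one hb.ne', abs_div, abs_of_pos hb, div_le_iff₀ hb]
  have hbt : 0 < b ^ t := Real.rpow_pos_of_pos hb t
  calc |a ^ t - b ^ t| = |(a / b) ^ t - 1| * b ^ t := by
        rw [Real.div_rpow ha hb.le, div_sub_one hbt.ne', abs_div, abs_of_pos hbt,
          div_mul_cancel₀ _ hbt.ne']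
    _ ≤ t * (β * w) * (1 + β * w) ^ (t - 1) * b ^ t := by
        gcongr
        exact abs_rpow_sub_one_le ht (div_nonneg ha hb.le) hr
    _ ≤ t * (β * (1 + w)) * (1 + w) ^ (t - 1) * b ^ t := by
        have : β * w ≤ w := mul_le_of_le_one_left hw hβ1
        gcongr
        linarith
    _ = t * β * (1 + w) ^ t * b ^ t := by
        rw [Real.rpow_sub_one (by linarith : 1 + w ≠ 0)]
        field_simp

lemma setIntegral_sq_sub_sq_setIntegral_le {α : Type*} [MeasurableSpace α] {μ : Measure α}
    [IsProbabilityMeasure μ] {f : α → ℝ} {s : Set α} (hs : MeasurableSet s) (hf : MemLp f 2 μ)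
    (m : ℝ) :
    ∫ x in s, f x ^ 2 ∂μ - (∫ x in s, f x ∂μ) ^ 2 ≤ ∫ x, (f x - m) ^ 2 ∂μ + m ^ 2 * μ.real sᶜ := by
  have hf1 : Integrable f μ := hf.integrable one_le_two
  have hf2 : Integrable (fun x => f x ^ 2) μ := hf.integrable_sq
  have hexpand : ∫ x in s, (f x - m) ^ 2 ∂μ
      = ∫ x in s, f x ^ 2 ∂μ - 2 * m * ∫ x in s, f x ∂μ + m ^ 2 * μ.real s := by
    have h : ∀ x, (f x - m) ^ 2 = (f x ^ 2 - 2 * m * f x) + m ^ 2 := fun x => by ring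
    simp_rw [h]
    rw [integral_add (f := fun x => f x ^ 2 - 2 * m * f x) (hf2.sub (hf1.const_mul _)).restrict
      (integrable_const _), integral_sub hf2.restrict (hf1.const_mul _).restrict,
      integral_const_mul, setIntegral_const, smul_eq_mul, mul_comm (μ.real s)]
  have hrestrict : ∫ x in s, (f x - m) ^ 2 ∂μ ≤ ∫ x, (f x - m) ^ 2 ∂μ :=
    setIntegral_le_integral (hf.sub (memLp_const m)).integrable_sq
      (ae_of_all _ fun x => sq_nonneg _)
  have hcompl : μ.real s + μ.real sᶜ = 1 := by
    rw [measureReal_add_measureReal_compl hs, probReal_univ]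
  nlinarith [sq_nonneg (∫ x in s, f x ∂μ - m)]

section Gaussian

lemma integral_sq_gaussianReal_zero (v : NNReal) : ∫ z, z ^ 2 ∂(gaussianReal 0 v) = v := by
  have h := variance_fun_id_gaussianReal (μ := 0) (v := v)
  rw [variance_eq_integral measurable_id'.aemeasurable] at h
  simpa using h

lemma integrable_one_add_abs_rpow_gaussianReal (μ : ℝ) (v : NNReal) {p : ℝ} (hp : 0 ≤ p) :
    Integrable (fun x => (1 + |x|) ^ p) (gaussianReal μ v) := by
  have hid : MemLp (fun x => x) p.toNNReal (gaussianReal μ v) := memLp_id_gaussianReal _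
  refine ((memLp_const (1 : ℝ)).add hid.norm).integrable_norm_rpow'.congr
    (ae_of_all _ fun x => ?_)
  simp only [Pi.add_apply, Real.norm_eq_abs, ENNReal.coe_toReal, Real.coe_toNNReal _ hp]
  rw [abs_of_nonneg (by positivity)]

lemma memLp_two_abs_rpow_gaussianReal (μ : ℝ) (v : NNReal) {t : ℝ} (ht : 0 ≤ t) :
    MemLp (fun x => |x| ^ t) 2 (gaussianReal μ v) := by
  have hid : MemLp (fun x => x) (2 * t).toNNReal (gaussianReal μ v) := memLp_id_gaussianReal _
  refine (memLp_two_iff_integrable_sq (by fun_prop)).2 (hid.integrable_norm_rpow'.congr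
    (ae_of_all _ fun x => ?_))
  simp only [Real.norm_eq_abs, ENNReal.coe_toReal, Real.coe_toNNReal _ (by positivity : 0 ≤ 2 * t)]
  exact rpow_two_mul (abs_nonneg x) t

lemma gaussianReal_map_standardize (θ : ℝ) {σ : ℝ} (hσ : σ ≠ 0) :
    (gaussianReal θ (σ ^ 2).toNNReal).map (fun x => (x - θ) / σ) = gaussianReal 0 1 := by
  have : (fun x : ℝ => (x - θ) / σ) = (· / σ) ∘ (· - θ) := rfl
  rw [this, ← Measure.map_map (by fun_prop) (by fun_prop), gaussianReal_map_sub_const,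
    gaussianReal_map_div_const, sub_self, zero_div]
  congr
  ext
  simp [max_eq_left (sq_nonneg σ), hσ]

lemma integral_gaussianReal_le_of_le_comp_standardize {θ σ : ℝ} {f g : ℝ → ℝ} (hσ : σ ≠ 0)
    (hf : 0 ≤ f) (hg : Integrable g (gaussianReal 0 1)) (hfg : ∀ x, f x ≤ g ((x - θ) / σ)) :
    ∫ x, f x ∂(gaussianReal θ (σ ^ 2).toNNReal) ≤ ∫ z, g z ∂(gaussianReal 0 1) := by
  rw [← gaussianReal_map_standardize θ hσ] at hg ⊢
  rw [integral_map (by fun_prop) hg.aestronglyMeasurable]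
  exact integral_mono_of_nonneg (ae_of_all _ hf) (hg.comp_measurable (by fun_prop))
    (ae_of_all _ hfg)

variable {t β σ θ : ℝ}

lemma integral_sq_abs_rpow_sub_abs_rpow_le (ht : 1 ≤ t) (hβ : β ≤ 1) (hσ : 0 < σ)
    (hσβ : σ ≤ β * |θ|) :
    ∫ x, (|x| ^ t - |θ| ^ t) ^ 2 ∂(gaussianReal θ (σ ^ 2).toNNReal)
      ≤ (t * β * |θ| ^ t) ^ 2 * ∫ z, (1 + |z|) ^ (2 * t) ∂(gaussianReal 0 1) := by
  have hβθ : 0 < β * |θ| := hσ.trans_le hσβ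
  have hβ0 : 0 < β := pos_of_mul_pos_left hβθ (abs_nonneg θ)
  rw [← integral_const_mul]
  refine integral_gaussianReal_le_of_le_comp_standardize hσ.ne' (fun x => sq_nonneg _)
    ((integrable_one_add_abs_rpow_gaussianReal 0 1 (by linarith)).const_mul _) fun x => ?_
  have hdev : |(|x| - |θ|)| ≤ β * |(x - θ) / σ| * |θ| :=
    calc |(|x| - |θ|)| ≤ |x - θ| := abs_abs_sub_abs_le_abs_sub x θ
      _ = |(x - θ) / σ| * σ := by rw [abs_div, abs_of_pos hσ, div_mul_cancel₀ _ hσ.ne']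
      _ ≤ |(x - θ) / σ| * (β * |θ|) := by gcongr
      _ = β * |(x - θ) / σ| * |θ| := by ring
  have h := abs_rpow_sub_rpow_le ht (abs_nonneg x) (pos_of_mul_pos_right hβθ hβ0.le) hβ0.le hβ
    (abs_nonneg _) hdev
  calc (|x| ^ t - |θ| ^ t) ^ 2 ≤ (t * β * (1 + |(x - θ) / σ|) ^ t * |θ| ^ t) ^ 2 :=
        sq_le_sq' (abs_le.1 h).1 (abs_le.1 h).2
    _ = (t * β * |θ| ^ t) ^ 2 * (1 + |(x - θ) / σ|) ^ (2 * t) := by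
        rw [rpow_two_mul (by positivity)]; ring

lemma measureReal_abs_rpow_lt_le {τ : ℝ} (ht : 0 < t) (hβ : β ≤ 1 / 2) (hσ : 0 < σ)
    (hσβ : σ ≤ β * |θ|) (hτ : τ ≤ (β * |θ|) ^ t) :
    (gaussianReal θ (σ ^ 2).toNNReal).real {x | |x| ^ t < τ} ≤ 4 * β ^ 2 := by
  have hβ0 : 0 < β := pos_of_mul_pos_left (hσ.trans_le hσβ) (abs_nonneg θ)
  rw [← integral_indicator_one (measurableSet_lt (by fun_prop) measurable_const)]
  calc ∫ x, {x : ℝ | |x| ^ t < τ}.indicator 1 x ∂(gaussianReal θ (σ ^ 2).toNNReal)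
      ≤ ∫ z, 4 * β ^ 2 * z ^ 2 ∂(gaussianReal 0 1) := by
        refine integral_gaussianReal_le_of_le_comp_standardize hσ.ne'
          (Set.indicator_nonneg fun _ _ => zero_le_one)
          ((memLp_id_gaussianReal 2).integrable_sq.const_mul _) fun x => ?_
        by_cases hx : x ∈ {x : ℝ | |x| ^ t < τ}
        · rw [Set.indicator_of_mem hx, Pi.one_apply]
          have hxθ : |x| < β * |θ| :=
            (Real.rpow_lt_rpow_iff (abs_nonneg x) (by positivity) ht).1 (hx.out.trans_le hτ)
          have hθ : |θ| ≤ 2 * |x - θ| := by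
            have := abs_sub_abs_le_abs_sub θ x
            rw [abs_sub_comm θ x] at this
            nlinarith [abs_nonneg θ]
          have hz : 1 ≤ 2 * β * |(x - θ) / σ| := by
            rw [abs_div, abs_of_pos hσ, mul_div_assoc', one_le_div₀ hσ]
            nlinarith
          nlinarith [sq_abs ((x - θ) / σ)]
        · rw [Set.indicator_of_notMem hx]
          positivity
    _ = 4 * β ^ 2 := by rw [integral_const_mul, integral_sq_gaussianReal_zero]; simp

end Gaussian

lemma exists_pos_le_half_sq_mul_le {c ε : ℝ} (hc : 0 ≤ c) (hε : 0 < ε) :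
    ∃ β > 0, β ≤ 1 / 2 ∧ β ^ 2 * c ≤ ε := by
  set β := min (1 / 2) (ε / (c + 1))
  have hβ0 : 0 < β := by positivity
  have hβ1 : β ≤ 1 := (min_le_left _ _).trans (by norm_num)
  have hβε : β * (c + 1) ≤ ε := (le_div_iff₀ (by positivity)).1 (min_le_right _ _)
  refine ⟨β, hβ0, min_le_left _ _, ?_⟩
  nlinarith [mul_le_mul_of_nonneg_right hβ1 (mul_nonneg hβ0.le hc)]

/-- For `t ≥ 1` and `ε > 0` there is `B ≥ 1` depending only on `t` and `ε` such
that for all `σ, τ > 0` with `σ^t ≤ τ` and all `θ` with `|θ|^t ≥ B τ`: if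
`X ~ N(θ, σ²)` and `ζ = 1{|X|^t ≥ τ}`, then
`E[|X|^(2t) ζ] - (E[|X|^t ζ])² ≤ ε |θ|^(2t)`. -/
theorem truncated_second_moment_gap (t ε : ℝ) (ht : 1 ≤ t) (hε : 0 < ε) :
    ∃ B ≥ (1 : ℝ), ∀ σ τ θ : ℝ, 0 < σ → 0 < τ → σ ^ t ≤ τ → B * τ ≤ |θ| ^ t →
      (∫ x in {x : ℝ | τ ≤ |x| ^ t}, |x| ^ (2 * t)
          ∂(gaussianReal θ (σ ^ 2).toNNReal)) -
        (∫ x in {x : ℝ | τ ≤ |x| ^ t}, |x| ^ t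
          ∂(gaussianReal θ (σ ^ 2).toNNReal)) ^ 2
        ≤ ε * |θ| ^ (2 * t) := by
  set K := ∫ z, (1 + |z|) ^ (2 * t) ∂(gaussianReal 0 1)
  have hK : 0 ≤ K := integral_nonneg fun z => by positivity
  obtain ⟨β, hβ0, hβ, hβε⟩ := exists_pos_le_half_sq_mul_le (c := t ^ 2 * K + 4) (by positivity) hε
  refine ⟨β⁻¹ ^ t, Real.one_le_rpow ((one_le_inv₀ hβ0).2 (by linarith)) (by linarith),
    fun σ τ θ hσ hτ hστ hBτ => ?_⟩
  have hτβ : τ ≤ (β * |θ|) ^ t := by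
    rwa [Real.mul_rpow hβ0.le (abs_nonneg θ), ← inv_mul_le_iff₀ (by positivity),
      ← Real.inv_rpow hβ0.le]
  have hσβ : σ ≤ β * |θ| :=
    (Real.rpow_le_rpow_iff hσ.le (by positivity) (by linarith)).1 (hστ.trans hτβ)
  have hcompl : {x : ℝ | τ ≤ |x| ^ t}ᶜ = {x | |x| ^ t < τ} := by ext; simp
  calc _ = (∫ x in {x : ℝ | τ ≤ |x| ^ t}, (|x| ^ t) ^ 2 ∂(gaussianReal θ (σ ^ 2).toNNReal)) -
        (∫ x in {x : ℝ | τ ≤ |x| ^ t}, |x| ^ t ∂(gaussianReal θ (σ ^ 2).toNNReal)) ^ 2 := by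
        simp_rw [rpow_two_mul (abs_nonneg _)]
    _ ≤ ∫ x, (|x| ^ t - |θ| ^ t) ^ 2 ∂(gaussianReal θ (σ ^ 2).toNNReal) +
        (|θ| ^ t) ^ 2 * (gaussianReal θ (σ ^ 2).toNNReal).real {x : ℝ | τ ≤ |x| ^ t}ᶜ :=
        setIntegral_sq_sub_sq_setIntegral_le (measurableSet_le measurable_const (by fun_prop))
          (memLp_two_abs_rpow_gaussianReal θ _ (by linarith)) _
    _ ≤ (t * β * |θ| ^ t) ^ 2 * K + (|θ| ^ t) ^ 2 * (4 * β ^ 2) := by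
        rw [hcompl]
        gcongr
        · exact integral_sq_abs_rpow_sub_abs_rpow_le ht (by linarith) hσ hσβ
        · exact measureReal_abs_rpow_lt_le (by linarith) hβ hσ hσβ hτβ
    _ = β ^ 2 * (t ^ 2 * K + 4) * (|θ| ^ t) ^ 2 := by ring
    _ ≤ ε * |θ| ^ (2 * t) := by
        rw [rpow_two_mul (abs_nonneg θ)]
        gcongr
end
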